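/- arXiv:2405.03549 — 3 statements merged into one kernel-verified Lean document; each statement's English description precedes it below -/
import Mathlib

section
/- Let Ω be a finite set, p₀ : Ω → [0,∞) with Σ_{x₀∈Ω} p₀(x₀) = 1, and p : Ω × Ω → (0,∞), writing p(x|x₀) for the forward transition probability from x₀ to x. Define p_t(x) = Σ_{x₀∈Ω} p(x|x₀) p₀(x₀) and, for x with p_t(x) > 0, the reverse transition probability p_{0|t}(x₀|x) = p(x|x₀) p₀(x₀) / p_t(x). Fix x, y ∈ Ω with p_t(x) > 0 and let r(x|y) ∈ ℝ be a given forward rate. If r̄(y|x) ∈ ℝ satisfies the time-reversal relation r̄(y|x) · p_t(x) = r(x|y) · p_t(y), then r̄(y|x) = ( Σ_{x₀∈Ω} [ p(y|x₀) / p(x|x₀) ] · p_{0|t}(x₀|x) ) · r(x|y), i.e. the backward rate equals the conditional expectation of the transition-probability ratio under p_{0|t}(·|x) times the forward rate with switched arguments. -/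
/-!
The tilting factor `p(y|x₀) / p(x|x₀)` cancels the likelihood in the Bayes posterior
`p_{0|t}(x₀|x) = p(x|x₀) p₀(x₀) / p_t(x)`, so the conditional expectation is `p_t(y) / p_t(x)`,
which is exactly the factor the time-reversal relation puts in front of `r(x|y)`.
-/

theorem Finset.sum_div_mul_mul_div_eq {ι K : Type*} [Field K] (s : Finset ι) (a b w : ι → K)
    (hb : ∀ i ∈ s, b i ≠ 0) (Z : K) :
    ∑ i ∈ s, a i / b i * (b i * w i / Z) = (∑ i ∈ s, a i * w i) / Z := by
  rw [Finset.sum_div]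
  refine Finset.sum_congr rfl fun i hi => ?_
  field_simp [hb i hi]

theorem backward_rate_eq_condExp_mul_forward_rate_general
    {Ω : Type*} [Fintype Ω]
    (p₀ : Ω → ℝ)
    (p : Ω → Ω → ℝ) (hp : ∀ x x₀, 0 < p x x₀)
    (pt : Ω → ℝ) (hpt : ∀ x, pt x = ∑ x₀, p x x₀ * p₀ x₀)
    (x y : Ω) (hptx : 0 < pt x)
    (r rbar : ℝ)
    (hrev : rbar * pt x = r * pt y) :
    rbar = (∑ x₀, (p y x₀ / p x x₀) * (p x x₀ * p₀ x₀ / pt x)) * r := by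
  rw [Finset.sum_div_mul_mul_div_eq _ _ _ _ (fun x₀ _ => (hp x x₀).ne'), ← hpt,
    div_mul_eq_mul_div, eq_div_iff hptx.ne', hrev, mul_comm]

/-- Lemma 3.1 (backward rates of the time-reversed Markov jump process):
if `r̄(y|x) p_t(x) = r(x|y) p_t(y)`, then the backward rate equals the conditional
expectation of the transition-probability ratio under the reverse transition
probability `p_{0|t}(·|x)` times the forward rate with switched arguments. -/
theorem backward_rate_eq_condExp_mul_forward_rate
    {Ω : Type*} [Fintype Ω]
    (p₀ : Ω → ℝ) (hp₀ : ∀ x₀, 0 ≤ p₀ x₀) (hp₀sum : ∑ x₀, p₀ x₀ = 1)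
    (p : Ω → Ω → ℝ) (hp : ∀ x x₀, 0 < p x x₀)
    (pt : Ω → ℝ) (hpt : ∀ x, pt x = ∑ x₀, p x x₀ * p₀ x₀)
    (x y : Ω) (hptx : 0 < pt x)
    (r rbar : ℝ)
    (hrev : rbar * pt x = r * pt y) :
    rbar = (∑ x₀, (p y x₀ / p x x₀) * (p x x₀ * p₀ x₀ / pt x)) * r :=
  backward_rate_eq_condExp_mul_forward_rate_general p₀ p hp pt hpt x y hptx r rbar hrev
end

section
/- Let S ∈ ℕ with S ≥ 1, δ = 2/√S, and x ∈ ℝ. Let Ω be a finite set, w : Ω → [0,∞) with Σ_{x₀∈Ω} w(x₀) = 1 (playing the role of the reverse transition probability p_{0|t}(·|x)), and let p(x−δ|x₀), p(x|x₀), p(x+δ|x₀) be strictly positive reals for each x₀ ∈ Ω (playing the role of forward transition probabilities). Define the averaged forward and backward difference quotients E⁺ = Σ_{x₀} w(x₀) (p(x+δ|x₀) − p(x|x₀)) / (δ p(x|x₀)) and E⁻ = Σ_{x₀} w(x₀) (p(x|x₀) − p(x−δ|x₀)) / (δ p(x|x₀)), and define the reverse rates r̄⁺ = ( Σ_{x₀}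 w(x₀) p(x+δ|x₀)/p(x|x₀) ) · ((√S/4)(√S + x) + 1/2) and r̄⁻ = ( Σ_{x₀} w(x₀) p(x−δ|x₀)/p(x|x₀) ) · ((√S/4)(√S − x) + 1/2). Then the first jump moment of the time-reversed process satisfies the exact identity δ r̄⁺ − δ r̄⁻ = x + (1 + x/√S + 2/S) E⁺ + (1 − x/√S + 2/S) E⁻. In particular, with b(x) = −x and D(x) = 2, it equals −b(x) + D(x)·(E⁺ + E⁻)/2 + R with remainder R = (x/√S + 2/S) E⁺ + (−x/√S + 2/S) E⁻, making precise the o(S^{−1/2}) claim of Proposition 4.3 for the first jump moment whenever E⁺ and E⁻ are bounded. -/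
/-! Because the weights sum to one, each averaged difference quotient equals
(averaged ratio − 1)/δ up to sign, and the identity becomes a rational identity in `√S`, `x`
and the two averaged ratios `∑ w · p(x ± δ | ·)/p(x | ·)`. -/

open Finset

theorem weighted_sum_forward_diff_quotient {ι : Type*} (s : Finset ι) (w p q : ι → ℝ) (δ : ℝ)
    (hw : ∑ i ∈ s, w i = 1) (hp : ∀ i ∈ s, p i ≠ 0) :
    ∑ i ∈ s, w i * ((q i - p i) / (δ * p i)) = (∑ i ∈ s, w i * (q i / p i) - 1) / δ := by
  have hterm : ∀ i ∈ s, w i * ((q i - p i) / (δ * p i)) = (w i * (q i / p i) - w i) / δ := by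
    intro i hi
    rw [div_mul_eq_div_div_swap, sub_div, div_self (hp i hi)]
    ring
  rw [sum_congr rfl hterm, ← sum_div, sum_sub_distrib, hw]

theorem weighted_sum_backward_diff_quotient {ι : Type*} (s : Finset ι) (w p q : ι → ℝ) (δ : ℝ)
    (hw : ∑ i ∈ s, w i = 1) (hp : ∀ i ∈ s, p i ≠ 0) :
    ∑ i ∈ s, w i * ((p i - q i) / (δ * p i)) = (1 - ∑ i ∈ s, w i * (q i / p i)) / δ := by
  have hneg := weighted_sum_forward_diff_quotient s w p q δ hw hp
  simp only [← neg_sub (q _), neg_div, mul_neg, sum_neg_distrib] at hneg ⊢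
  rw [hneg, ← neg_div, neg_sub]

/-- Here `s = √S`, `(s/4)(s ± x) + 1/2 = r(x | x ± 2/s)` is the forward Ehrenfest rate into `x`,
and `A`, `B` are the averaged ratios `p(x ± δ | x₀)/p(x | x₀)`. -/
theorem ehrenfest_reversed_drift_eq (s S x A B : ℝ) (hs : s ≠ 0) (hsS : s ^ 2 = S) :
    2 / s * (A * (s / 4 * (s + x) + 1 / 2)) - 2 / s * (B * (s / 4 * (s - x) + 1 / 2))
      = x + (1 + x / s + 2 / S) * ((A - 1) / (2 / s))
        + (1 - x / s + 2 / S) * ((1 - B) / (2 / s)) := by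
  subst hsS
  field_simp
  ring

theorem reversed_first_jump_moment_exact_general
    {Ω : Type*} [Fintype Ω]
    (S : ℕ) (hS : 1 ≤ S) (x : ℝ)
    (δ : ℝ) (hδ : δ = 2 / Real.sqrt S)
    (w : Ω → ℝ) (hwsum : ∑ x₀, w x₀ = 1)
    (pm p0 pp : Ω → ℝ)
    (hp0 : ∀ x₀, 0 < p0 x₀)
    (Ep Em : ℝ)
    (hEp : Ep = ∑ x₀, w x₀ * ((pp x₀ - p0 x₀) / (δ * p0 x₀)))
    (hEm : Em = ∑ x₀, w x₀ * ((p0 x₀ - pm x₀) / (δ * p0 x₀)))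
    (rp rm : ℝ)
    (hrp : rp = (∑ x₀, w x₀ * (pp x₀ / p0 x₀)) * (Real.sqrt S / 4 * (Real.sqrt S + x) + 1 / 2))
    (hrm : rm = (∑ x₀, w x₀ * (pm x₀ / p0 x₀)) * (Real.sqrt S / 4 * (Real.sqrt S - x) + 1 / 2)) :
    δ * rp - δ * rm
      = x + (1 + x / Real.sqrt S + 2 / S) * Ep + (1 - x / Real.sqrt S + 2 / S) * Em := by
  have hp0' : ∀ x₀ ∈ univ, p0 x₀ ≠ 0 := fun x₀ _ => (hp0 x₀).ne'
  have hsqrt : Real.sqrt S ≠ 0 := Real.sqrt_ne_zero'.mpr (by exact_mod_cast hS)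
  rw [hEp, hEm, weighted_sum_forward_diff_quotient _ w p0 pp δ hwsum hp0',
    weighted_sum_backward_diff_quotient _ w p0 pm δ hwsum hp0', hrp, hrm, hδ]
  exact ehrenfest_reversed_drift_eq _ _ x _ _ hsqrt (Real.sq_sqrt (Nat.cast_nonneg S))

/-- Exact algebraic form of the first jump moment of the time-reversed scaled Ehrenfest
process (Proposition 4.3, first moment). With `δ = 2/√S`, weights `w` (the reverse
transition probability), positive forward transition probabilities `pm, p0, pp` at
`x − δ, x, x + δ`, averaged difference quotients `E⁺, E⁻` and reverse rates `r̄⁺, r̄⁻`,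
we have `δ r̄⁺ − δ r̄⁻ = x + (1 + x/√S + 2/S) E⁺ + (1 − x/√S + 2/S) E⁻`. -/
theorem reversed_first_jump_moment_exact
    {Ω : Type*} [Fintype Ω]
    (S : ℕ) (hS : 1 ≤ S) (x : ℝ)
    (δ : ℝ) (hδ : δ = 2 / Real.sqrt S)
    (w : Ω → ℝ) (hw : ∀ x₀, 0 ≤ w x₀) (hwsum : ∑ x₀, w x₀ = 1)
    (pm p0 pp : Ω → ℝ)
    (hpm : ∀ x₀, 0 < pm x₀) (hp0 : ∀ x₀, 0 < p0 x₀) (hpp : ∀ x₀, 0 < pp x₀)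
    (Ep Em : ℝ)
    (hEp : Ep = ∑ x₀, w x₀ * ((pp x₀ - p0 x₀) / (δ * p0 x₀)))
    (hEm : Em = ∑ x₀, w x₀ * ((p0 x₀ - pm x₀) / (δ * p0 x₀)))
    (rp rm : ℝ)
    (hrp : rp = (∑ x₀, w x₀ * (pp x₀ / p0 x₀)) * (Real.sqrt S / 4 * (Real.sqrt S + x) + 1 / 2))
    (hrm : rm = (∑ x₀, w x₀ * (pm x₀ / p0 x₀)) * (Real.sqrt S / 4 * (Real.sqrt S - x) + 1 / 2)) :
    δ * rp - δ * rm
      = x + (1 + x / Real.sqrt S + 2 / S) * Ep + (1 - x / Real.sqrt S + 2 / S) * Em :=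
  reversed_first_jump_moment_exact_general S hS x δ hδ w hwsum pm p0 pp hp0 Ep Em hEp hEm rp rm hrp
    hrm
end

section
/- Let S ∈ ℕ with S ≥ 1, δ = 2/√S, and x ∈ ℝ. Let Ω be a finite set, w : Ω → [0,∞) with Σ_{x₀∈Ω} w(x₀) = 1, and let p(x−δ|x₀), p(x|x₀), p(x+δ|x₀) be strictly positive reals for each x₀ ∈ Ω. Define E⁺ = Σ_{x₀} w(x₀) (p(x+δ|x₀) − p(x|x₀)) / (δ p(x|x₀)) and E⁻ = Σ_{x₀} w(x₀) (p(x|x₀) − p(x−δ|x₀)) / (δ p(x|x₀)), and the reverse rates r̄⁺ = ( Σ_{x₀} w(x₀) p(x+δ|x₀)/p(x|x₀) ) · ((√S/4)(√S + x) + 1/2) and r̄⁻ = ( Σ_{x₀} w(x₀) p(x−δ|x₀)/p(x|x₀) ) · ((√S/4)(√S − x) + 1/2). Then the second jump moment of the time-reversed process satisfies the exact identity δ² r̄⁺ + δ² r̄⁻ = 2 + 4/S + δ·[ (1 + x/√S + 2/S) E⁺ − (1 − x/√S + 2/S) E⁻ ]. In particular, it equals D(x) = 2 up to a term of size O(1/√S)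 whenever E⁺ and E⁻ are bounded and |x| ≤ √S, making precise the o(S^{−1/2}) claim of Proposition 4.3 for the second jump moment. -/
/-!
With `δ = 2/√S`, the factor `δ²` turns each reverse-rate coefficient `(√S/4)(√S ± x) + 1/2`
into `1 ± x/√S + 2/S`, while the weighted mean of the ratios `p(x ± δ|x₀)/p(x|x₀)` is
`1 ± δ E^±` because the weights sum to one. Expanding the product of the two gives the identity.
-/

open Finset

section WeightedRatio

variable {ι : Type*} [Fintype ι] (w p q : ι → ℝ) {δ : ℝ}

theorem sum_mul_div_eq_one_add_mul_sum (hw : ∑ i, w i = 1) (hδ : δ ≠ 0) (hq : ∀ i, q i ≠ 0) :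
    ∑ i, w i * (p i / q i) = 1 + δ * ∑ i, w i * ((p i - q i) / (δ * q i)) := by
  rw [mul_sum, ← hw, ← sum_add_distrib]
  refine sum_congr rfl fun i _ => ?_
  field_simp [hq i]
  ring

theorem sum_mul_div_eq_one_sub_mul_sum (hw : ∑ i, w i = 1) (hδ : δ ≠ 0) (hq : ∀ i, q i ≠ 0) :
    ∑ i, w i * (p i / q i) = 1 - δ * ∑ i, w i * ((q i - p i) / (δ * q i)) := by
  rw [sum_mul_div_eq_one_add_mul_sum w p q hw hδ hq, sub_eq_add_neg, ← mul_neg, ← sum_neg_distrib]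
  simp only [← mul_neg, ← neg_div, neg_sub]

end WeightedRatio

theorem two_div_sq_mul_rate (s x : ℝ) (hs : s ≠ 0) :
    (2 / s) ^ 2 * (s / 4 * (s + x) + 1 / 2) = 1 + x / s + 2 / s ^ 2 := by
  field_simp
  ring

theorem reversed_second_jump_moment_exact_general
    {Ω : Type*} [Fintype Ω]
    (S : ℕ) (hS : 1 ≤ S) (x : ℝ)
    (δ : ℝ) (hδ : δ = 2 / Real.sqrt S)
    (w : Ω → ℝ) (hwsum : ∑ x₀, w x₀ = 1)
    (pm p0 pp : Ω → ℝ)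
    (hp0 : ∀ x₀, 0 < p0 x₀)
    (Ep Em : ℝ)
    (hEp : Ep = ∑ x₀, w x₀ * ((pp x₀ - p0 x₀) / (δ * p0 x₀)))
    (hEm : Em = ∑ x₀, w x₀ * ((p0 x₀ - pm x₀) / (δ * p0 x₀)))
    (rp rm : ℝ)
    (hrp : rp = (∑ x₀, w x₀ * (pp x₀ / p0 x₀)) * (Real.sqrt S / 4 * (Real.sqrt S + x) + 1 / 2))
    (hrm : rm = (∑ x₀, w x₀ * (pm x₀ / p0 x₀)) * (Real.sqrt S / 4 * (Real.sqrt S - x) + 1 / 2)) :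
    δ ^ 2 * rp + δ ^ 2 * rm
      = 2 + 4 / S
        + δ * ((1 + x / Real.sqrt S + 2 / S) * Ep - (1 - x / Real.sqrt S + 2 / S) * Em) := by
  have hS_pos : (0 : ℝ) < S := by exact_mod_cast hS
  set s := Real.sqrt S
  have hs : s ≠ 0 := (Real.sqrt_pos.2 hS_pos).ne'
  have hS_sq : (S : ℝ) = s ^ 2 := (Real.sq_sqrt hS_pos.le).symm
  have hδ0 : δ ≠ 0 := hδ ▸ div_ne_zero two_ne_zero hs
  have hp0' : ∀ x₀, p0 x₀ ≠ 0 := fun x₀ => (hp0 x₀).ne'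
  rw [hrp, hrm, sum_mul_div_eq_one_add_mul_sum w pp p0 hwsum hδ0 hp0', ← hEp,
    sum_mul_div_eq_one_sub_mul_sum w pm p0 hwsum hδ0 hp0', ← hEm, hS_sq, hδ]
  linear_combination (1 + 2 / s * Ep) * two_div_sq_mul_rate s x hs
    + (1 - 2 / s * Em) * two_div_sq_mul_rate s (-x) hs

/-- Exact algebraic form of the second jump moment of the time-reversed scaled Ehrenfest
process (Proposition 4.3, second moment). With `δ = 2/√S`, weights `w`, positive forward
transition probabilities `pm, p0, pp` at `x − δ, x, x + δ`, averaged difference quotients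
`E⁺, E⁻` and reverse rates `r̄⁺, r̄⁻`, we have
`δ² r̄⁺ + δ² r̄⁻ = 2 + 4/S + δ·[(1 + x/√S + 2/S) E⁺ − (1 − x/√S + 2/S) E⁻]`. -/
theorem reversed_second_jump_moment_exact
    {Ω : Type*} [Fintype Ω]
    (S : ℕ) (hS : 1 ≤ S) (x : ℝ)
    (δ : ℝ) (hδ : δ = 2 / Real.sqrt S)
    (w : Ω → ℝ) (hw : ∀ x₀, 0 ≤ w x₀) (hwsum : ∑ x₀, w x₀ = 1)
    (pm p0 pp : Ω → ℝ)
    (hpm : ∀ x₀, 0 < pm x₀) (hp0 : ∀ x₀, 0 < p0 x₀) (hpp : ∀ x₀, 0 < pp x₀)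
    (Ep Em : ℝ)
    (hEp : Ep = ∑ x₀, w x₀ * ((pp x₀ - p0 x₀) / (δ * p0 x₀)))
    (hEm : Em = ∑ x₀, w x₀ * ((p0 x₀ - pm x₀) / (δ * p0 x₀)))
    (rp rm : ℝ)
    (hrp : rp = (∑ x₀, w x₀ * (pp x₀ / p0 x₀)) * (Real.sqrt S / 4 * (Real.sqrt S + x) + 1 / 2))
    (hrm : rm = (∑ x₀, w x₀ * (pm x₀ / p0 x₀)) * (Real.sqrt S / 4 * (Real.sqrt S - x) + 1 / 2)) :
    δ ^ 2 * rp + δ ^ 2 * rm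
      = 2 + 4 / S
        + δ * ((1 + x / Real.sqrt S + 2 / S) * Ep - (1 - x / Real.sqrt S + 2 / S) * Em) :=
  reversed_second_jump_moment_exact_general S hS x δ hδ w hwsum pm p0 pp hp0 Ep Em hEp hEm rp rm hrp
    hrm
end
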